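/- Let 0 < α ≤ 1, β > 0 and t > 0. Then the function t ↦ e^{t^α/α} is α-differentiable at t and 𝒟_M^{α,β}(e^{t^α/α}) = e^{t^α/α} / Γ(β+1). -/

import Mathlib

open Filter Topology

/-- One-parameter Mittag-Leffler function `E_β(x) = ∑_{k=0}^∞ x^k / Γ(βk+1)`. -/
noncomputable def mittagLeffler (β x : ℝ) : ℝ :=
  ∑' k : ℕ, x ^ k / Real.Gamma (β * k + 1)

/-- `f` has local M-derivative `L` of order `α` with parameter `β` at `t`, i.e.
`lim_{ε→0} (f (t · E_β (ε t^{-α})) - f t)/ε = L`. -/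
def HasLocalMDerivAt (α β : ℝ) (f : ℝ → ℝ) (t L : ℝ) : Prop :=
  Tendsto (fun ε : ℝ => (f (t * mittagLeffler β (ε * t ^ (-α))) - f t) / ε)
    (𝓝[≠] (0 : ℝ)) (𝓝 L)

/-! Since `Γ` has a positive minimum on `(0, ∞)`, the Mittag-Leffler series is dominated by a
geometric series on `|x| < 1` and can be differentiated termwise at `0`: `E_β(0) = 1` and
`E_β'(0) = 1 / Γ(β+1)`. So by the chain rule `ε ↦ t E_β(ε t^{-α})` has derivative
`t^{1-α} / Γ(β+1)` at `0`. Hence for differentiable `f` the M-derivative is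
`t^{1-α} f'(t) / Γ(β+1)`, and for `f(t) = e^{t^α/α}` the factor `t^{1-α}` cancels against
`f'(t) = t^{α-1} e^{t^α/α}`. -/

lemma exists_pos_le_Gamma_mul_natCast_add_one {β : ℝ} (hβ : 0 ≤ β) :
    ∃ c > 0, ∀ k : ℕ, c ≤ Real.Gamma (β * k + 1) := by
  obtain ⟨x₀, hx₀, hmin⟩ := Real.exists_isMinOn_Gamma_Ioi
  exact ⟨Real.Gamma x₀, Real.Gamma_pos_of_pos (by linarith [hx₀.1]),
    fun k => hmin (show 0 < β * k + 1 by positivity)⟩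

lemma mittagLeffler_zero (β : ℝ) : mittagLeffler β 0 = 1 := by
  rw [mittagLeffler, tsum_eq_single 0 fun k hk => by simp [zero_pow hk]]
  simp

lemma summable_mittagLeffler {β x : ℝ} (hβ : 0 ≤ β) (hx : |x| < 1) :
    Summable fun k : ℕ => x ^ k / Real.Gamma (β * k + 1) := by
  obtain ⟨c, hc, hΓ⟩ := exists_pos_le_Gamma_mul_natCast_add_one hβ
  refine .of_norm_bounded ((summable_geometric_of_lt_one (abs_nonneg x) hx).div_const c)
    fun k => ?_
  rw [norm_div, norm_pow, Real.norm_eq_abs, Real.norm_of_nonneg (hc.trans_le (hΓ k)).le]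
  exact div_le_div_of_nonneg_left (by positivity) hc (hΓ k)

lemma hasDerivAt_mittagLeffler_zero {β : ℝ} (hβ : 0 ≤ β) :
    HasDerivAt (mittagLeffler β) (1 / Real.Gamma (β + 1)) 0 := by
  obtain ⟨c, hc, hΓ⟩ := exists_pos_le_Gamma_mul_natCast_add_one hβ
  have hu : Summable fun k : ℕ => 2 * (k * (1 / 2 : ℝ) ^ k) / c :=
    ((hasSum_coe_mul_geometric_of_norm_lt_one (r := (1 / 2 : ℝ)) (by norm_num)).summable.mul_left
      2).div_const c
  have hbound (k : ℕ) (y : ℝ) (hy : y ∈ Metric.ball (0 : ℝ) (1 / 2)) :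
      ‖k * y ^ (k - 1) / Real.Gamma (β * k + 1)‖ ≤ 2 * (k * (1 / 2 : ℝ) ^ k) / c := by
    rw [Metric.mem_ball, Real.dist_0_eq_abs] at hy
    rw [Real.norm_eq_abs, abs_div, abs_mul, abs_pow, Nat.abs_cast,
      abs_of_pos (hc.trans_le (hΓ k))]
    refine div_le_div₀ (by positivity) ?_ hc (hΓ k)
    rcases k with _ | k
    · simp
    · calc ((k + 1 : ℕ) : ℝ) * |y| ^ k ≤ (k + 1 : ℕ) * (1 / 2) ^ k := by gcongr
        _ = 2 * ((k + 1 : ℕ) * (1 / 2) ^ (k + 1)) := by ring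
  have hderiv : HasDerivAt (mittagLeffler β)
      (∑' k : ℕ, (k : ℝ) * (0 : ℝ) ^ (k - 1) / Real.Gamma (β * k + 1)) 0 :=
    hasDerivAt_tsum_of_isPreconnected hu Metric.isOpen_ball
    (convex_ball _ _).isPreconnected (fun k y _ => (hasDerivAt_pow k y).div_const _) hbound
    (Metric.mem_ball_self one_half_pos) (summable_mittagLeffler hβ (by norm_num))
    (Metric.mem_ball_self one_half_pos)
  have hsum : ∑' k : ℕ, (k : ℝ) * (0 : ℝ) ^ (k - 1) / Real.Gamma (β * k + 1)
      = 1 / Real.Gamma (β + 1) := by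
    rw [tsum_eq_single 1 fun k hk => ?_]
    · simp
    · rcases k with _ | k
      · simp
      · simp [show k ≠ 0 by omega]
  rwa [hsum] at hderiv

theorem HasDerivAt.hasLocalMDerivAt {f : ℝ → ℝ} {f' α β t : ℝ} (hf : HasDerivAt f f' t)
    (hβ : 0 ≤ β) (ht : 0 < t) :
    HasLocalMDerivAt α β f t (t ^ (1 - α) * f' / Real.Gamma (β + 1)) := by
  have hinner : HasDerivAt (fun ε : ℝ => t * mittagLeffler β (ε * t ^ (-α)))
      (t * (1 / Real.Gamma (β + 1) * t ^ (-α))) 0 := by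
    have hE := hasDerivAt_mittagLeffler_zero hβ
    rw [← zero_mul (t ^ (-α))] at hE
    simpa using (hE.comp 0 ((hasDerivAt_id 0).mul_const _)).const_mul t
  have hinner0 : t * mittagLeffler β (0 * t ^ (-α)) = t := by
    rw [zero_mul, mittagLeffler_zero, mul_one]
  have hcomp := (hinner0 ▸ hf).comp 0 hinner
  have hval : f' * (t * (1 / Real.Gamma (β + 1) * t ^ (-α)))
      = t ^ (1 - α) * f' / Real.Gamma (β + 1) := by
    rw [sub_eq_add_neg, Real.rpow_add ht, Real.rpow_one]
    ring
  rw [hval, hasDerivAt_iff_tendsto_slope] at hcomp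
  refine hcomp.congr fun ε => ?_
  simp [slope_def_field, Function.comp_def, mittagLeffler_zero]

theorem stmt11_general (α β t : ℝ) (hα0 : 0 < α) (hβ : 0 < β) (ht : 0 < t) :
    HasLocalMDerivAt α β (fun x : ℝ => Real.exp (x ^ α / α)) t
      (Real.exp (t ^ α / α) / Real.Gamma (β + 1)) := by
  have hf : HasDerivAt (fun x : ℝ => Real.exp (x ^ α / α))
      (Real.exp (t ^ α / α) * (α * t ^ (α - 1) / α)) t :=
    ((Real.hasDerivAt_rpow_const (Or.inl ht.ne')).div_const α).exp
  have hcancel : t ^ (1 - α) * t ^ (α - 1) = 1 := by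
    rw [← Real.rpow_add ht, sub_add_sub_cancel', sub_self, Real.rpow_zero]
  convert hf.hasLocalMDerivAt hβ.le ht using 2
  rw [mul_div_cancel_left₀ _ hα0.ne', mul_left_comm, hcancel, mul_one]

/-- `𝒟_M^{α,β}(e^{t^α/α}) = e^{t^α/α}/Γ(β+1)`. -/
theorem stmt11 (α β t : ℝ) (hα0 : 0 < α) (hα1 : α ≤ 1) (hβ : 0 < β) (ht : 0 < t) :
    HasLocalMDerivAt α β (fun x : ℝ => Real.exp (x ^ α / α)) t
      (Real.exp (t ^ α / α) / Real.Gamma (β + 1)) :=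
  stmt11_general α β t hα0 hβ ht
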